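/- The gradient of Ẽ_X(y) = (2X₁²+3X₂²)y₁⁶ + (9X₁²+6X₂²)y₁⁴y₂² + 10X₁X₂y₁³y₂³ + (6X₁²+9X₂²)y₁²y₂⁴ + (3X₁²+2X₂²)y₂⁶ and the gradient of G(y) = y₁⁴ + 3y₁²y₂² + y₂⁴ are linearly dependent at (y₁,y₂) if and only if y₁y₂(y₁−y₂)(y₁+y₂)(y₁²+y₂²)(X₁y₂−X₂y₁)² = 0. -/
import Mathlib

def Etilde (X₁ X₂ y₁ y₂ : ℝ) : ℝ :=
  (2*X₁^2 + 3*X₂^2)*y₁^6 + (9*X₁^2 + 6*X₂^2)*y₁^4*y₂^2 + 10*X₁*X₂*y₁^3*y₂^3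
    + (6*X₁^2 + 9*X₂^2)*y₁^2*y₂^4 + (3*X₁^2 + 2*X₂^2)*y₂^6

def G (y₁ y₂ : ℝ) : ℝ := y₁^4 + 3*y₁^2*y₂^2 + y₂^4

noncomputable def gradEtilde (X₁ X₂ y₁ y₂ : ℝ) : ℝ × ℝ :=
  (deriv (fun t => Etilde X₁ X₂ t y₂) y₁, deriv (fun t => Etilde X₁ X₂ y₁ t) y₂)

noncomputable def gradG (y₁ y₂ : ℝ) : ℝ × ℝ :=
  (deriv (fun t => G t y₂) y₁, deriv (fun t => G y₁ t) y₂)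

lemma derivE1 (X₁ X₂ y₁ y₂ : ℝ) :
    deriv (fun t => Etilde X₁ X₂ t y₂) y₁ =
      6*(2*X₁^2 + 3*X₂^2)*y₁^5 + 4*(9*X₁^2 + 6*X₂^2)*y₁^3*y₂^2
        + 3*(10*X₁*X₂)*y₁^2*y₂^3 + 2*(6*X₁^2 + 9*X₂^2)*y₁*y₂^4 := by
  have h : HasDerivAt (fun t => Etilde X₁ X₂ t y₂)
      ((2*X₁^2 + 3*X₂^2)*(↑6*y₁^5) + ((9*X₁^2 + 6*X₂^2)*(↑4*y₁^3))*y₂^2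
        + (10*X₁*X₂*(↑3*y₁^2))*y₂^3 + ((6*X₁^2 + 9*X₂^2)*(↑2*y₁^1))*y₂^4 + 0) y₁ := by
    unfold Etilde
    exact ((((((hasDerivAt_pow 6 y₁).const_mul _).add
      (((hasDerivAt_pow 4 y₁).const_mul _).mul_const _)).add
      (((hasDerivAt_pow 3 y₁).const_mul _).mul_const _)).add
      (((hasDerivAt_pow 2 y₁).const_mul _).mul_const _)).add
      (hasDerivAt_const _ _))
  rw [h.deriv]; push_cast; ring

lemma derivE2 (X₁ X₂ y₁ y₂ : ℝ) :
    deriv (fun t => Etilde X₁ X₂ y₁ t) y₂ =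
      2*(9*X₁^2 + 6*X₂^2)*y₁^4*y₂ + 3*(10*X₁*X₂)*y₁^3*y₂^2
        + 4*(6*X₁^2 + 9*X₂^2)*y₁^2*y₂^3 + 6*(3*X₁^2 + 2*X₂^2)*y₂^5 := by
  have h : HasDerivAt (fun t => Etilde X₁ X₂ y₁ t)
      (0 + ((9*X₁^2 + 6*X₂^2)*y₁^4)*(↑2*y₂^1) + (10*X₁*X₂*y₁^3)*(↑3*y₂^2)
        + ((6*X₁^2 + 9*X₂^2)*y₁^2)*(↑4*y₂^3) + (3*X₁^2 + 2*X₂^2)*(↑6*y₂^5)) y₂ := by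
    unfold Etilde
    exact ((((hasDerivAt_const y₂ ((2*X₁^2 + 3*X₂^2)*y₁^6)).add
      ((hasDerivAt_pow 2 y₂).const_mul _)).add
      ((hasDerivAt_pow 3 y₂).const_mul _)).add
      ((hasDerivAt_pow 4 y₂).const_mul _)).add
      ((hasDerivAt_pow 6 y₂).const_mul _)
  rw [h.deriv]; push_cast; ring

lemma derivG1 (y₁ y₂ : ℝ) :
    deriv (fun t => G t y₂) y₁ = 4*y₁^3 + 6*y₁*y₂^2 := by
  have h : HasDerivAt (fun t => G t y₂) (↑4*y₁^3 + (3*(↑2*y₁^1))*y₂^2 + 0) y₁ := by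
    unfold G
    exact ((hasDerivAt_pow 4 y₁).add
      (((hasDerivAt_pow 2 y₁).const_mul 3).mul_const (y₂^2))).add
      (hasDerivAt_const y₁ (y₂^4))
  rw [h.deriv]; push_cast; ring

lemma derivG2 (y₁ y₂ : ℝ) :
    deriv (fun t => G y₁ t) y₂ = 6*y₁^2*y₂ + 4*y₂^3 := by
  have h : HasDerivAt (fun t => G y₁ t) (0 + (3*y₁^2)*(↑2*y₂^1) + ↑4*y₂^3) y₂ := by
    unfold G
    exact ((hasDerivAt_const y₂ (y₁^4)).add
      ((hasDerivAt_pow 2 y₂).const_mul (3*y₁^2))).add (hasDerivAt_pow 4 y₂)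
  rw [h.deriv]; push_cast; ring

theorem critical_point_condition (X₁ X₂ y₁ y₂ : ℝ) :
    (gradEtilde X₁ X₂ y₁ y₂).1 * (gradG y₁ y₂).2
      - (gradEtilde X₁ X₂ y₁ y₂).2 * (gradG y₁ y₂).1 = 0
    ↔ y₁ * y₂ * (y₁ - y₂) * (y₁ + y₂) * (y₁^2 + y₂^2) * (X₁*y₂ - X₂*y₁)^2 = 0 := by
  have key : (gradEtilde X₁ X₂ y₁ y₂).1 * (gradG y₁ y₂).2
      - (gradEtilde X₁ X₂ y₁ y₂).2 * (gradG y₁ y₂).1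
      = 60 * (y₁ * y₂ * (y₁ - y₂) * (y₁ + y₂) * (y₁^2 + y₂^2) * (X₁*y₂ - X₂*y₁)^2) := by
    simp only [gradEtilde, gradG, derivE1, derivE2, derivG1, derivG2]
    ring
  rw [key]
  constructor
  · intro h; linarith
  · intro h; rw [h]; ring
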